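/- arXiv:0812.1898 — 2 statements merged into one kernel-verified Lean document; each statement's English description precedes it below -/
import Mathlib

section
/- (Existence of γ-contractions.) Let (δ, Δ) be galactic space data on a type F and let γ : K be limited with 0 < γ. Then there exist a type F', galactic space data (δ', Δ') on F', and a surjective map g : F → F' which is a γ-contraction, i.e. for all x y : F: (a) if δ x y ≠ ⊤ then δ' (g x) (g y) ≠ ⊤ and γ * f ((δ x y).toReal) - f ((δ' (g x) (g y)).toReal) is infinitesimal; (b) if δ x y = ⊤ then δ' (g x) (g y) = ⊤ if and only if γ * Δ x y is not limited, and if γ * Δ x y is limited then γ * Δ x y - f ((δ' (g x) (g y)).toReal) is infinitesimal; (c) Δ' (g x) (g y) - γ * Δ x y is limited. -/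
universe u

open ENNReal

variable {K : Type*} [Field K] [LinearOrder K] [IsStrictOrderedRing K]

/-- `s : K` is infinitesimal: `|s| < f r` for every real `r > 0`. -/
def IsInfinitesimal (f : ℝ →+* K) (s : K) : Prop := ∀ r : ℝ, 0 < r → |s| < f r

/-- `s : K` is limited: `|s| ≤ f r` for some real `r > 0`. -/
def IsLimited (f : ℝ →+* K) (s : K) : Prop := ∃ r : ℝ, 0 < r ∧ |s| ≤ f r

/-- Galactic space data on a type `F`: an extended distance `δ` together with a
galaxy-valued distance `Δ` between metric components, encoded on points. -/
structure GalacticData (K : Type*) [Field K] [LinearOrder K] [IsStrictOrderedRing K] (f : ℝ →+* K) (F : Type*) where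
  δ : F → F → ℝ≥0∞
  Δ : F → F → K
  δ_self : ∀ x, δ x x = 0
  δ_pos : ∀ x y, x ≠ y → 0 < δ x y
  δ_symm : ∀ x y, δ x y = δ y x
  δ_triangle : ∀ x y z, δ x z ≤ δ x y + δ y z
  Δ_congr : ∀ x x' y y', δ x x' ≠ ⊤ → δ y y' ≠ ⊤ → IsLimited f (Δ x y - Δ x' y')
  Δ_symm : ∀ x y, IsLimited f (Δ x y - Δ y x)
  Δ_limited_iff : ∀ x y, IsLimited f (Δ x y) ↔ δ x y ≠ ⊤
  Δ_pos : ∀ x y, δ x y = ⊤ → 0 < Δ x y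
  Δ_triangle : ∀ x y z, Δ x z ≤ Δ x y + Δ y z ∨ IsLimited f (Δ x z - (Δ x y + Δ y z))

/-- `g : F → F'` is a `γ`-contraction between galactic space data. -/
def IsContraction (f : ℝ →+* K) {F F' : Type*}
    (G : GalacticData K f F) (G' : GalacticData K f F') (γ : K) (g : F → F') : Prop :=
  Function.Surjective g ∧
  ∀ x y : F,
    (G.δ x y ≠ ⊤ →
      G'.δ (g x) (g y) ≠ ⊤ ∧
      IsInfinitesimal f (γ * f (G.δ x y).toReal - f (G'.δ (g x) (g y)).toReal)) ∧
    (G.δ x y = ⊤ →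
      (G'.δ (g x) (g y) = ⊤ ↔ ¬ IsLimited f (γ * G.Δ x y)) ∧
      (IsLimited f (γ * G.Δ x y) →
        IsInfinitesimal f (γ * G.Δ x y - f (G'.δ (g x) (g y)).toReal))) ∧
    IsLimited f (G'.Δ (g x) (g y) - γ * G.Δ x y)

/-!
If `γ` is appreciable (limited but not infinitesimal), nothing has to be identified: keep `F`,
multiply `δ` by the standard part of `γ` and `Δ` by `γ`.

If `γ` is infinitesimal, then `γ * Δ` is infinitesimal inside each metric component, and it is
symmetric and satisfies the triangle inequality up to infinitesimals. After identifying points at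
infinitesimal `γ * Δ`-distance, the standard part of `γ * Δ` (`⊤` where it is unlimited) is an
extended metric on the quotient, and `γ * Δ` on representatives is its galactic distance.

Limited and infinitesimal elements are exactly those of nonnegative, resp. positive, Archimedean
class, so the standard part is `ArchimedeanClass.stdPart`.
-/

open ArchimedeanClass

section Infinitesimals

variable {f : ℝ →+* K} {s t : K}

def orderRingHomOfReal (f : ℝ →+* K) : ℝ →+*o K :=
  ⟨f, ringHom_monotone (fun _ ↦ Real.isSquare_iff.2) f⟩

theorem isLimited_iff_mk_nonneg : IsLimited f s ↔ 0 ≤ mk s := by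
  constructor
  · rintro ⟨r, hr, hs⟩
    rw [← mk_map_of_archimedean' (orderRingHomOfReal f) hr.ne', ← mk_abs s]
    exact mk_le_mk_of_abs ((abs_abs s).trans_le (hs.trans (le_abs_self _)))
  · intro hs
    obtain ⟨n, hn⟩ := exists_nat_ge_of_mk_nonneg (x := |s|) (by rwa [mk_abs])
    exact ⟨n + 1, by positivity, by simpa using hn.trans (le_add_of_nonneg_right zero_le_one)⟩

theorem isInfinitesimal_iff_mk_pos : IsInfinitesimal f s ↔ 0 < mk s := by
  constructor
  · intro hs
    by_contra! hle
    obtain ⟨q, hq, hqs⟩ := mk_le_mk_iff_ratCast.1 (hle.trans_eq mk_one.symm)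
    have := hs q (by exact_mod_cast hq)
    simp only [abs_one, mul_one, map_ratCast] at hqs this
    exact hqs.not_gt this
  · intro hs r hr
    exact lt_of_pos_of_archimedean (orderRingHomOfReal f) (by rwa [mk_abs]) hr

theorem isInfinitesimal_zero : IsInfinitesimal f (0 : K) :=
  isInfinitesimal_iff_mk_pos.2 (by simp)

theorem IsLimited.add (hs : IsLimited f s) (ht : IsLimited f t) : IsLimited f (s + t) := by
  rw [isLimited_iff_mk_nonneg] at *
  exact (le_min hs ht).trans (min_le_mk_add s t)

theorem IsLimited.sub (hs : IsLimited f s) (ht : IsLimited f t) : IsLimited f (s - t) := by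
  rw [isLimited_iff_mk_nonneg] at *
  exact (le_min hs ht).trans (min_le_mk_sub s t)

theorem IsLimited.neg (hs : IsLimited f s) : IsLimited f (-s) := by
  rwa [isLimited_iff_mk_nonneg, mk_neg, ← isLimited_iff_mk_nonneg]

theorem IsLimited.mul (hs : IsLimited f s) (ht : IsLimited f t) : IsLimited f (s * t) := by
  rw [isLimited_iff_mk_nonneg, mk_mul] at *
  exact add_nonneg hs ht

theorem IsInfinitesimal.isLimited (hs : IsInfinitesimal f s) : IsLimited f s := by
  rw [isInfinitesimal_iff_mk_pos] at hs
  exact isLimited_iff_mk_nonneg.2 hs.le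

theorem IsInfinitesimal.neg (hs : IsInfinitesimal f s) : IsInfinitesimal f (-s) := by
  rwa [isInfinitesimal_iff_mk_pos, mk_neg, ← isInfinitesimal_iff_mk_pos]

theorem IsInfinitesimal.add (hs : IsInfinitesimal f s) (ht : IsInfinitesimal f t) :
    IsInfinitesimal f (s + t) := by
  rw [isInfinitesimal_iff_mk_pos] at *
  exact (lt_min hs ht).trans_le (min_le_mk_add s t)

theorem IsInfinitesimal.sub (hs : IsInfinitesimal f s) (ht : IsInfinitesimal f t) :
    IsInfinitesimal f (s - t) := by
  rw [isInfinitesimal_iff_mk_pos] at *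
  exact (lt_min hs ht).trans_le (min_le_mk_sub s t)

theorem IsInfinitesimal.mul_isLimited (hs : IsInfinitesimal f s) (ht : IsLimited f t) :
    IsInfinitesimal f (s * t) := by
  rw [isLimited_iff_mk_nonneg] at ht
  rw [isInfinitesimal_iff_mk_pos, mk_mul] at *
  exact hs.trans_le (le_add_of_nonneg_right ht)

theorem isLimited_map (r : ℝ) : IsLimited f (f r) :=
  isLimited_iff_mk_nonneg.2 (mk_map_nonneg_of_archimedean (orderRingHomOfReal f) r)

theorem IsLimited.of_le_of_le {a b : K} (ha : IsLimited f a) (hb : IsLimited f b)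
    (has : a ≤ s) (hsb : s ≤ b) : IsLimited f s := by
  rw [isLimited_iff_mk_nonneg] at *
  exact (le_min ha hb).trans (min_le_mk_of_le_of_le has hsb)

theorem IsInfinitesimal.of_le_of_le {a b : K} (ha : IsInfinitesimal f a)
    (hb : IsInfinitesimal f b) (has : a ≤ s) (hsb : s ≤ b) : IsInfinitesimal f s := by
  rw [isInfinitesimal_iff_mk_pos] at *
  exact (lt_min ha hb).trans_le (min_le_mk_of_le_of_le has hsb)

theorem IsLimited.mk_eq_zero (hs : IsLimited f s) (h : ¬ IsInfinitesimal f s) : mk s = 0 :=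
  le_antisymm (not_lt.1 (mt isInfinitesimal_iff_mk_pos.2 h)) (isLimited_iff_mk_nonneg.1 hs)

theorem IsLimited.stdPart_pos (hs : IsLimited f s) (h : ¬ IsInfinitesimal f s) (hpos : 0 < s) :
    0 < stdPart s :=
  (stdPart_nonneg hpos.le).lt_of_ne' <| by simpa using hs.mk_eq_zero h

theorem IsLimited.isInfinitesimal_sub_stdPart (hs : IsLimited f s) :
    IsInfinitesimal f (s - f (stdPart s)) :=
  isInfinitesimal_iff_mk_pos.2 <|
    mk_sub_stdPart_pos (orderRingHomOfReal f) (isLimited_iff_mk_nonneg.1 hs)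

end Infinitesimals

section ExtStdPart

variable {f : ℝ →+* K} {s t : K}

open Classical in
/-- `ENNReal.ofReal` clamps negative standard parts to `0`. -/
noncomputable def extStdPart (f : ℝ →+* K) (s : K) : ℝ≥0∞ :=
  if IsLimited f s then ENNReal.ofReal (stdPart s) else ⊤

theorem extStdPart_ne_top_iff : extStdPart f s ≠ ⊤ ↔ IsLimited f s := by
  unfold extStdPart
  split_ifs with h <;> simp [h]

theorem toReal_extStdPart (hs : IsLimited f s) (h0 : 0 ≤ s) :
    (extStdPart f s).toReal = stdPart s := by
  rw [extStdPart, if_pos hs, ENNReal.toReal_ofReal (stdPart_nonneg h0)]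

theorem extStdPart_of_isInfinitesimal (hs : IsInfinitesimal f s) : extStdPart f s = 0 := by
  rw [extStdPart, if_pos hs.isLimited,
    stdPart_of_mk_ne_zero (isInfinitesimal_iff_mk_pos.1 hs).ne', ENNReal.ofReal_zero]

theorem extStdPart_congr (h : IsInfinitesimal f (s - t)) : extStdPart f s = extStdPart f t := by
  have hlim : IsLimited f s ↔ IsLimited f t :=
    ⟨fun hs ↦ by simpa using hs.sub h.isLimited, fun ht ↦ by simpa using ht.add h.isLimited⟩
  have hstd : stdPart s = stdPart t := by
    simpa using stdPart_add_eq_left (x := t) (isInfinitesimal_iff_mk_pos.1 h)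
  by_cases hs : IsLimited f s
  · rw [extStdPart, extStdPart, if_pos hs, if_pos (hlim.1 hs), hstd]
  · rw [extStdPart, extStdPart, if_neg hs, if_neg (mt hlim.2 hs)]

theorem extStdPart_pos (hs : 0 < s) (h : ¬ IsInfinitesimal f s) : 0 < extStdPart f s := by
  unfold extStdPart
  split_ifs with hl
  · exact ENNReal.ofReal_pos.2 (hl.stdPart_pos h hs)
  · exact ENNReal.zero_lt_top

theorem extStdPart_le_add {u E : K} (hs : IsLimited f s ∨ 0 ≤ s) (hE : IsInfinitesimal f E)
    (h : s ≤ t + u + E) : extStdPart f s ≤ extStdPart f t + extStdPart f u := by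
  by_cases ht : IsLimited f t
  swap
  · simp [extStdPart, ht]
  by_cases hu : IsLimited f u
  swap
  · simp [extStdPart, hu]
  have hsum : IsLimited f (t + u + E) := (ht.add hu).add hE.isLimited
  have hs' : IsLimited f s :=
    hs.elim id fun h0 ↦ isInfinitesimal_zero.isLimited.of_le_of_le hsum h0 h
  rw [extStdPart, extStdPart, extStdPart, if_pos hs', if_pos ht, if_pos hu]
  refine (ENNReal.ofReal_le_ofReal ?_).trans ENNReal.ofReal_add_le
  calc stdPart s ≤ stdPart (t + u + E) :=
        stdPart_monotoneOn (isLimited_iff_mk_nonneg.1 hs') (isLimited_iff_mk_nonneg.1 hsum) h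
    _ = stdPart t + stdPart u := by
        rw [stdPart_add_eq_left (isInfinitesimal_iff_mk_pos.1 hE),
          stdPart_add (isLimited_iff_mk_nonneg.1 ht) (isLimited_iff_mk_nonneg.1 hu)]

end ExtStdPart

theorem ENNReal.ofReal_mul_eq_top_iff {c : ℝ} (hc : 0 < c) {a : ℝ≥0∞} :
    ENNReal.ofReal c * a = ⊤ ↔ a = ⊤ := by
  simp [ENNReal.mul_eq_top, hc]

namespace GalacticData

variable {f : ℝ →+* K} {F : Type*} (G : GalacticData K f F) {γ : K}

theorem mul_Δ_triangle (hγ : IsLimited f γ) (hγ0 : 0 ≤ γ) (x y z : F) :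
    γ * G.Δ x z ≤ γ * G.Δ x y + γ * G.Δ y z ∨
      IsLimited f (γ * G.Δ x z - (γ * G.Δ x y + γ * G.Δ y z)) := by
  rw [← mul_add, ← mul_sub]
  exact (G.Δ_triangle x y z).imp (mul_le_mul_of_nonneg_left · hγ0) hγ.mul

noncomputable def scale (γ : K) (hγlim : IsLimited f γ) (hγinf : ¬ IsInfinitesimal f γ)
    (hγpos : 0 < γ) : GalacticData K f F where
  δ x y := ENNReal.ofReal (stdPart γ) * G.δ x y
  Δ x y := γ * G.Δ x y
  δ_self x := by rw [G.δ_self, mul_zero]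
  δ_pos x y hxy := ENNReal.mul_pos (ENNReal.ofReal_pos.2 (hγlim.stdPart_pos hγinf hγpos)).ne'
    (G.δ_pos x y hxy).ne'
  δ_symm x y := by rw [G.δ_symm]
  δ_triangle x y z := by
    rw [← mul_add]
    gcongr
    exact G.δ_triangle x y z
  Δ_congr x x' y y' hx hy := by
    rw [← mul_sub]
    rw [Ne, ENNReal.ofReal_mul_eq_top_iff (hγlim.stdPart_pos hγinf hγpos)] at hx hy
    exact hγlim.mul (G.Δ_congr x x' y y' hx hy)
  Δ_symm x y := by
    rw [← mul_sub]
    exact hγlim.mul (G.Δ_symm x y)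
  Δ_limited_iff x y := by
    rw [isLimited_iff_mk_nonneg, mk_mul, hγlim.mk_eq_zero hγinf, zero_add,
      ← isLimited_iff_mk_nonneg, G.Δ_limited_iff, Ne, Ne,
      ENNReal.ofReal_mul_eq_top_iff (hγlim.stdPart_pos hγinf hγpos)]
  Δ_pos x y h := mul_pos hγpos <|
    G.Δ_pos x y ((ENNReal.ofReal_mul_eq_top_iff (hγlim.stdPart_pos hγinf hγpos)).1 h)
  Δ_triangle := G.mul_Δ_triangle hγlim hγpos.le

theorem isContraction_scale (hγlim : IsLimited f γ) (hγinf : ¬ IsInfinitesimal f γ)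
    (hγpos : 0 < γ) : IsContraction f G (G.scale γ hγlim hγinf hγpos) γ id := by
  have hc := hγlim.stdPart_pos hγinf hγpos
  refine ⟨Function.surjective_id, fun x y ↦ ⟨fun h ↦ ⟨?_, ?_⟩, fun h ↦ ?_, ?_⟩⟩
  · exact (ENNReal.ofReal_mul_eq_top_iff hc).not.2 h
  · have hsplit : γ * f (G.δ x y).toReal - f ((G.scale γ hγlim hγinf hγpos).δ x y).toReal =
        (γ - f (stdPart γ)) * f (G.δ x y).toReal := by
      simp only [scale, ENNReal.toReal_mul, ENNReal.toReal_ofReal hc.le, map_mul]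
      ring
    rw [id, id, hsplit]
    exact hγlim.isInfinitesimal_sub_stdPart.mul_isLimited (isLimited_map _)
  · have htop : (G.scale γ hγlim hγinf hγpos).δ x y = ⊤ :=
      (ENNReal.ofReal_mul_eq_top_iff hc).2 h
    have hnlim : ¬ IsLimited f (γ * G.Δ x y) :=
      fun hl ↦ ((G.scale γ hγlim hγinf hγpos).Δ_limited_iff x y).1 hl htop
    exact ⟨iff_of_true htop hnlim, (absurd · hnlim)⟩
  · simpa [scale] using isInfinitesimal_zero.isLimited

theorem isInfinitesimal_mul_Δ_of_ne_top (hγ : IsInfinitesimal f γ) {x y : F}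
    (h : G.δ x y ≠ ⊤) : IsInfinitesimal f (γ * G.Δ x y) :=
  hγ.mul_isLimited ((G.Δ_limited_iff x y).2 h)

theorem isInfinitesimal_mul_Δ_self (hγ : IsInfinitesimal f γ) (x : F) :
    IsInfinitesimal f (γ * G.Δ x x) :=
  G.isInfinitesimal_mul_Δ_of_ne_top hγ (by simp [G.δ_self])

theorem isInfinitesimal_or_mul_Δ_pos (hγ : IsInfinitesimal f γ) (hγpos : 0 < γ) (x y : F) :
    IsInfinitesimal f (γ * G.Δ x y) ∨ 0 < γ * G.Δ x y := by
  by_cases h : G.δ x y = ⊤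
  · exact .inr (mul_pos hγpos (G.Δ_pos x y h))
  · exact .inl (G.isInfinitesimal_mul_Δ_of_ne_top hγ h)

theorem isInfinitesimal_mul_Δ_sub_swap (hγ : IsInfinitesimal f γ) (x y : F) :
    IsInfinitesimal f (γ * G.Δ x y - γ * G.Δ y x) := by
  rw [← mul_sub]
  exact hγ.mul_isLimited (G.Δ_symm x y)

theorem isInfinitesimal_mul_Δ_symm (hγ : IsInfinitesimal f γ) {x y : F}
    (h : IsInfinitesimal f (γ * G.Δ x y)) : IsInfinitesimal f (γ * G.Δ y x) := by
  simpa using h.sub (G.isInfinitesimal_mul_Δ_sub_swap hγ x y)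

theorem isLimited_mul_Δ_symm (hγ : IsInfinitesimal f γ) {x y : F}
    (h : IsLimited f (γ * G.Δ x y)) : IsLimited f (γ * G.Δ y x) := by
  simpa using h.sub (G.isInfinitesimal_mul_Δ_sub_swap hγ x y).isLimited

theorem exists_mul_Δ_le_add (hγ : IsInfinitesimal f γ) (hγ0 : 0 ≤ γ) (x y z : F) :
    ∃ E, IsInfinitesimal f E ∧ γ * G.Δ x z ≤ γ * G.Δ x y + γ * G.Δ y z + E := by
  rcases G.Δ_triangle x y z with h | h
  · refine ⟨0, isInfinitesimal_zero, ?_⟩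
    rw [add_zero, ← mul_add]
    exact mul_le_mul_of_nonneg_left h hγ0
  · exact ⟨_, hγ.mul_isLimited h, by rw [mul_sub, mul_add, add_sub_cancel]⟩

theorem exists_mul_Δ_sub_le (hγ : IsInfinitesimal f γ) (hγ0 : 0 ≤ γ) (u u' v v' : F) :
    ∃ E, IsInfinitesimal f E ∧
      γ * G.Δ u v - γ * G.Δ u' v' ≤ γ * G.Δ u u' + γ * G.Δ v' v + E := by
  obtain ⟨E₁, h₁, hle₁⟩ := G.exists_mul_Δ_le_add hγ hγ0 u u' v
  obtain ⟨E₂, h₂, hle₂⟩ := G.exists_mul_Δ_le_add hγ hγ0 u' v' v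
  exact ⟨E₁ + E₂, h₁.add h₂, by linarith⟩

theorem isInfinitesimal_mul_Δ_sub (hγ : IsInfinitesimal f γ) (hγ0 : 0 ≤ γ) {u u' v v' : F}
    (hu : IsInfinitesimal f (γ * G.Δ u u')) (hv : IsInfinitesimal f (γ * G.Δ v v')) :
    IsInfinitesimal f (γ * G.Δ u v - γ * G.Δ u' v') := by
  obtain ⟨E, hE, hle⟩ := G.exists_mul_Δ_sub_le hγ hγ0 u u' v v'
  obtain ⟨E', hE', hle'⟩ := G.exists_mul_Δ_sub_le hγ hγ0 u' u v' v
  exact (((G.isInfinitesimal_mul_Δ_symm hγ hu).add hv).add hE').neg.of_le_of_le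
    ((hu.add (G.isInfinitesimal_mul_Δ_symm hγ hv)).add hE) (by linarith) hle

theorem isLimited_mul_Δ_sub (hγ : IsInfinitesimal f γ) (hγ0 : 0 ≤ γ) {u u' v v' : F}
    (hu : IsLimited f (γ * G.Δ u u')) (hv : IsLimited f (γ * G.Δ v v')) :
    IsLimited f (γ * G.Δ u v - γ * G.Δ u' v') := by
  obtain ⟨E, hE, hle⟩ := G.exists_mul_Δ_sub_le hγ hγ0 u u' v v'
  obtain ⟨E', hE', hle'⟩ := G.exists_mul_Δ_sub_le hγ hγ0 u' u v' v
  exact ((((G.isLimited_mul_Δ_symm hγ hu).add hv).add hE'.isLimited).neg).of_le_of_le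
    ((hu.add (G.isLimited_mul_Δ_symm hγ hv)).add hE.isLimited) (by linarith) hle

def haloSetoid (γ : K) (hγ : IsInfinitesimal f γ) (hγ0 : 0 ≤ γ) : Setoid F where
  r x y := IsInfinitesimal f (γ * G.Δ x y)
  iseqv.refl := G.isInfinitesimal_mul_Δ_self hγ
  iseqv.symm := G.isInfinitesimal_mul_Δ_symm hγ
  iseqv.trans {x y z} hxy hyz := by
    simpa using
      (G.isInfinitesimal_mul_Δ_sub hγ hγ0 hxy (G.isInfinitesimal_mul_Δ_self hγ z)).add hyz

noncomputable def contract (γ : K) (hγ : IsInfinitesimal f γ) (hγpos : 0 < γ) :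
    GalacticData K f (Quotient (G.haloSetoid γ hγ hγpos.le)) where
  δ a b := extStdPart f (γ * G.Δ a.out b.out)
  Δ a b := γ * G.Δ a.out b.out
  δ_self a := extStdPart_of_isInfinitesimal (G.isInfinitesimal_mul_Δ_self hγ a.out)
  δ_pos a b hab := by
    have hinf : ¬ IsInfinitesimal f (γ * G.Δ a.out b.out) :=
      fun h ↦ hab (Quotient.out_equiv_out.1 h)
    exact extStdPart_pos ((G.isInfinitesimal_or_mul_Δ_pos hγ hγpos _ _).resolve_left hinf) hinf
  δ_symm a b := extStdPart_congr (G.isInfinitesimal_mul_Δ_sub_swap hγ _ _)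
  δ_triangle a b c := by
    obtain ⟨E, hE, hle⟩ := G.exists_mul_Δ_le_add hγ hγpos.le a.out b.out c.out
    exact extStdPart_le_add
      ((G.isInfinitesimal_or_mul_Δ_pos hγ hγpos _ _).imp IsInfinitesimal.isLimited le_of_lt)
      hE hle
  Δ_congr a a' b b' ha hb := G.isLimited_mul_Δ_sub hγ hγpos.le
    (extStdPart_ne_top_iff.1 ha) (extStdPart_ne_top_iff.1 hb)
  Δ_symm a b := (G.isInfinitesimal_mul_Δ_sub_swap hγ _ _).isLimited
  Δ_limited_iff a b := extStdPart_ne_top_iff.symm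
  Δ_pos a b h := (G.isInfinitesimal_or_mul_Δ_pos hγ hγpos _ _).resolve_left
    fun hinf ↦ extStdPart_ne_top_iff.2 hinf.isLimited h
  Δ_triangle a b c := G.mul_Δ_triangle hγ.isLimited hγpos.le a.out b.out c.out

theorem isInfinitesimal_contract_Δ_mk_sub (hγ : IsInfinitesimal f γ) (hγpos : 0 < γ)
    (x y : F) : IsInfinitesimal f ((G.contract γ hγ hγpos).Δ ⟦x⟧ ⟦y⟧ - γ * G.Δ x y) :=
  G.isInfinitesimal_mul_Δ_sub hγ hγpos.le
    (Quotient.mk_out (s := G.haloSetoid γ hγ hγpos.le) x)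
    (Quotient.mk_out (s := G.haloSetoid γ hγ hγpos.le) y)

theorem contract_δ_mk (hγ : IsInfinitesimal f γ) (hγpos : 0 < γ) (x y : F) :
    (G.contract γ hγ hγpos).δ ⟦x⟧ ⟦y⟧ = extStdPart f (γ * G.Δ x y) :=
  extStdPart_congr (G.isInfinitesimal_contract_Δ_mk_sub hγ hγpos x y)

theorem isContraction_contract (hγ : IsInfinitesimal f γ) (hγpos : 0 < γ) :
    IsContraction f G (G.contract γ hγ hγpos) γ (Quotient.mk _) := by
  refine ⟨Quotient.mk_surjective, fun x y ↦ ⟨fun h ↦ ?_, fun h ↦ ?_, ?_⟩⟩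
  · have hzero : (G.contract γ hγ hγpos).δ ⟦x⟧ ⟦y⟧ = 0 := by
      rw [contract_δ_mk, extStdPart_of_isInfinitesimal (G.isInfinitesimal_mul_Δ_of_ne_top hγ h)]
    refine ⟨hzero ▸ ENNReal.zero_ne_top, ?_⟩
    simpa [hzero] using hγ.mul_isLimited (isLimited_map _)
  · rw [contract_δ_mk, ← extStdPart_ne_top_iff, not_not]
    refine ⟨Iff.rfl, fun hlim ↦ ?_⟩
    rw [extStdPart_ne_top_iff] at hlim
    rw [toReal_extStdPart hlim (mul_pos hγpos (G.Δ_pos x y h)).le]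
    exact hlim.isInfinitesimal_sub_stdPart
  · exact (G.isInfinitesimal_contract_Δ_mk_sub hγ hγpos x y).isLimited

end GalacticData

theorem exists_contraction_general (f : ℝ →+* K)
    {F : Type u} (G : GalacticData K f F)
    (γ : K) (hγlim : IsLimited f γ) (hγpos : 0 < γ) :
    ∃ (F' : Type u) (G' : GalacticData K f F') (g : F → F'),
      IsContraction f G G' γ g := by
  by_cases hγinf : IsInfinitesimal f γ
  · exact ⟨_, G.contract γ hγinf hγpos, _, G.isContraction_contract hγinf hγpos⟩
  · exact ⟨F, G.scale γ hγlim hγinf hγpos, id, G.isContraction_scale hγlim hγinf hγpos⟩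

/-- Existence of `γ`-contractions of any galactic space. -/
theorem exists_contraction (f : ℝ →+* K) (hf : ¬ Function.Surjective f)
    {F : Type u} (G : GalacticData K f F)
    (γ : K) (hγlim : IsLimited f γ) (hγpos : 0 < γ) :
    ∃ (F' : Type u) (G' : GalacticData K f F') (g : F → F'),
      IsContraction f G G' γ g :=
  exists_contraction_general f G γ hγlim hγpos
end

section
/- (Distinct chains are eventually infinitely far apart.) Let D := {α : ℝ* // 0 < α}. Let x x' : D → *X be chains, i.e. for all β ≤ α in D, both β * *d (x α) (x β) and β * *d (x' α) (x' β) are infinitesimal. Suppose the chains are distinct at some scale: there exists β ∈ D such that β * *d (x β) (x' β) is not infinitesimal. Then: (i) there exists α₀ ∈ D such that for every α ≥ α₀, the hyperreal α * *d (x α) (x' α) is infinite; and (ii) for every c : ℝ* there exists α₁ ∈ D such that for every α ≥ α₁, one has c < α * *d (x α) (x' α) and α * *d (x α) (x' α) - c is infinite (i.e. the galaxy of α * *d (x α) (x' α) tends to +∞). -/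
/-!
Fix a scale `β` at which the chains are apart: `β * *d (x β) (x' β) ≥ r` for a positive real `r`.
For `α ≥ β` the quadrilateral inequality through `x α` and `x' α` loses only the infinitesimals
`β * *d (x α) (x β)` and `β * *d (x' α) (x' β)`, so `β * *d (x α) (x' α) > r / 2`. Hence
`α * *d (x α) (x' α) ≥ (α / β) * r / 2`, which exceeds any given hyperreal once `α / β` is large.
-/

open Filter Hyperreal

/-- The germ-wise extension of the distance of a metric space to the germ space
`*X = ((hyperfilter ℕ : Filter ℕ)).Germ X`, with values in the hyperreals. -/
noncomputable def hdist {X : Type*} [MetricSpace X]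
    (x y : ((hyperfilter ℕ : Filter ℕ)).Germ X) : ℝ* :=
  Filter.Germ.map₂ dist x y

set_option linter.deprecated false

section HyperDist

variable {X : Type*} [MetricSpace X]

lemma hdist_nonneg (x y : ((hyperfilter ℕ : Filter ℕ)).Germ X) : 0 ≤ hdist x y := by
  induction x using Filter.Germ.inductionOn with | _ f =>
  induction y using Filter.Germ.inductionOn with | _ g =>
  exact Filter.Germ.coe_le.mpr (Eventually.of_forall fun _ => dist_nonneg)

lemma hdist_comm (x y : ((hyperfilter ℕ : Filter ℕ)).Germ X) : hdist x y = hdist y x := by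
  induction x using Filter.Germ.inductionOn with | _ f =>
  induction y using Filter.Germ.inductionOn with | _ g =>
  exact Filter.Germ.coe_eq.mpr (Eventually.of_forall fun _ => dist_comm _ _)

lemma hdist_triangle4 (x y z w : ((hyperfilter ℕ : Filter ℕ)).Germ X) :
    hdist x w ≤ hdist x y + hdist y z + hdist z w := by
  induction x using Filter.Germ.inductionOn with | _ f =>
  induction y using Filter.Germ.inductionOn with | _ g =>
  induction z using Filter.Germ.inductionOn with | _ h =>
  induction w using Filter.Germ.inductionOn with | _ k =>
  exact Filter.Germ.coe_le.mpr (Eventually.of_forall fun _ => dist_triangle4 _ _ _ _)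

end HyperDist

namespace Hyperreal

lemma exists_pos_real_le_of_not_infinitesimal {a : ℝ*} (ha : 0 ≤ a) (h : ¬Infinitesimal a) :
    ∃ r : ℝ, 0 < r ∧ (r : ℝ*) ≤ a := by
  by_contra! hlt
  exact h (infinitesimal_def.mpr fun r hr =>
    ⟨(neg_neg_of_pos (coe_pos.mpr hr)).trans_le ha, hlt r hr⟩)

end Hyperreal

def IsHyperChain {X : Type*} [MetricSpace X]
    (x : {α : ℝ* // 0 < α} → ((hyperfilter ℕ : Filter ℕ)).Germ X) : Prop :=
  ∀ β α : {α : ℝ* // 0 < α}, β ≤ α → Infinitesimal ((β : ℝ*) * hdist (x α) (x β))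

lemma IsHyperChain.half_lt_mul_hdist_of_le {X : Type*} [MetricSpace X]
    {x x' : {α : ℝ* // 0 < α} → ((hyperfilter ℕ : Filter ℕ)).Germ X}
    (hx : IsHyperChain x) (hx' : IsHyperChain x') {r : ℝ} (hr : 0 < r) {β α : {α : ℝ* // 0 < α}}
    (hβ : (r : ℝ*) ≤ β * hdist (x β) (x' β)) (hβα : β ≤ α) :
    (r : ℝ*) / 2 < β * hdist (x α) (x' α) := by
  have hquad : (β : ℝ*) * hdist (x β) (x' β) ≤
      β * hdist (x α) (x β) + β * hdist (x α) (x' α) + β * hdist (x' α) (x' β) := by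
    rw [← mul_add, ← mul_add, hdist_comm (x α) (x β)]
    exact mul_le_mul_of_nonneg_left (hdist_triangle4 _ _ _ _) β.2.le
  have hsmall := lt_of_pos_of_infinitesimal (hx β α hβα) (r / 4) (by positivity)
  have hsmall' := lt_of_pos_of_infinitesimal (hx' β α hβα) (r / 4) (by positivity)
  push_cast at hsmall hsmall'
  linarith

lemma exists_forall_ge_lt_mul_of_le_mul {g : {α : ℝ* // 0 < α} → ℝ*} {β : {α : ℝ* // 0 < α}}
    {r : ℝ*} (hr : 0 < r) (hg : ∀ α, β ≤ α → r ≤ β * g α) (y : ℝ*) :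
    ∃ α₁ : {α : ℝ* // 0 < α}, ∀ α, α₁ ≤ α → y < α * g α := by
  set m := |y| / r + 1
  have hm : 1 ≤ m := le_add_of_nonneg_left (by positivity)
  refine ⟨⟨β * m, mul_pos β.2 (by positivity)⟩, fun α hα => ?_⟩
  have hα : (β : ℝ*) * m ≤ α := hα
  have hβα : β ≤ α := Subtype.coe_le_coe.mp ((le_mul_of_one_le_right β.2.le hm).trans hα)
  refine lt_of_mul_lt_mul_left ?_ β.2.le
  calc (β : ℝ*) * y < β * (|y| + r) :=
        mul_lt_mul_of_pos_left ((le_abs_self y).trans_lt (lt_add_of_pos_right _ hr)) β.2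
    _ = β * m * r := by simp only [m]; field_simp
    _ ≤ α * r := mul_le_mul_of_nonneg_right hα hr.le
    _ ≤ α * (β * g α) := mul_le_mul_of_nonneg_left (hg α hβα) α.2.le
    _ = β * (α * g α) := by ring

/-- Distinct chains are eventually infinitely far apart, and the galaxy of their
mutual distance tends to `+∞`. -/
theorem distinct_chains_eventually_infinite {X : Type*} [MetricSpace X]
    (x x' : {α : ℝ* // 0 < α} → ((hyperfilter ℕ : Filter ℕ)).Germ X)
    (hx : ∀ β α : {α : ℝ* // 0 < α}, β ≤ α →
      Infinitesimal ((β : ℝ*) * hdist (x α) (x β)))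
    (hx' : ∀ β α : {α : ℝ* // 0 < α}, β ≤ α →
      Infinitesimal ((β : ℝ*) * hdist (x' α) (x' β)))
    (hne : ∃ β : {α : ℝ* // 0 < α}, ¬ Infinitesimal ((β : ℝ*) * hdist (x β) (x' β))) :
    (∃ α₀ : {α : ℝ* // 0 < α}, ∀ α, α₀ ≤ α →
      Infinite ((α : ℝ*) * hdist (x α) (x' α))) ∧
    (∀ c : ℝ*, ∃ α₁ : {α : ℝ* // 0 < α}, ∀ α, α₁ ≤ α →
      c < (α : ℝ*) * hdist (x α) (x' α) ∧
      Infinite ((α : ℝ*) * hdist (x α) (x' α) - c)) := by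
  obtain ⟨β, hβ⟩ := hne
  obtain ⟨r, hr, hrβ⟩ :=
    exists_pos_real_le_of_not_infinitesimal (mul_nonneg β.2.le (hdist_nonneg _ _)) hβ
  have hgrow := exists_forall_ge_lt_mul_of_le_mul (half_pos (coe_pos.mpr hr))
    fun α hβα => (IsHyperChain.half_lt_mul_hdist_of_le hx hx' hr hrβ hβα).le
  have hgalaxy : ∀ c : ℝ*, ∃ α₁ : {α : ℝ* // 0 < α}, ∀ α, α₁ ≤ α →
      c < (α : ℝ*) * hdist (x α) (x' α) ∧ Infinite ((α : ℝ*) * hdist (x α) (x' α) - c) := by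
    intro c
    obtain ⟨α₁, h₁⟩ := hgrow (c + ω)
    refine ⟨α₁, fun α hα => ⟨?_, Or.inl fun s => ?_⟩⟩
    · linarith [h₁ α hα, omega_pos]
    · linarith [h₁ α hα, coe_lt_omega s]
  obtain ⟨α₀, h₀⟩ := hgalaxy 0
  exact ⟨⟨α₀, fun α hα => by simpa using (h₀ α hα).2⟩, hgalaxy⟩
end
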